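/- Let f : ℂ → ℂ be holomorphic on ℂ ∖ { iπ(2k+1) : k ∈ ℤ }, meromorphic at each point iπ(2k+1), periodic with period 2πi (f(t+2πi) = f(t)), and suppose f(t) → 0 as Re t → +∞ and as Re t → −∞. Then there exist polynomials P, Q ∈ ℂ[X] with P(0) = 0 such that f(t) = P(η₀(t)) + η₁(t)·Q(η₀(t)) for all t in the domain of f, where η₀(t) = 1/cosh²(t/2) and η₁(t) = −sinh(t/2)/cosh³(t/2). Equivalently, f is a polynomial without constant term in the two base functions η₀ and η₁. -/

import Mathlib

/-- The base function `η₀(t) = cosh⁻²(t/2)`. -/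
noncomputable def eta0 (t : ℂ) : ℂ := 1 / Complex.cosh (t / 2) ^ 2

/-- The base function `η₁(t) = η₀'(t) = −sinh(t/2)·cosh⁻³(t/2)`. -/
noncomputable def eta1 (t : ℂ) : ℂ := -Complex.sinh (t / 2) / Complex.cosh (t / 2) ^ 3

/-- The singular set `{iπ(2k+1) : k ∈ ℤ}`. -/
def polesS : Set ℂ := {t : ℂ | ∃ k : ℤ, t = (Real.pi : ℂ) * (2 * k + 1) * Complex.I}

/-!
Near the pole `iπ`, the functions `tanh (t/2)`, `η₀ ^ k` and `η₁ η₀ ^ k` have poles of every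
order, so subtracting a suitable combination `c tanh (t/2) + η₀ P(η₀) + η₁ Q(η₀)` leaves a function
holomorphic at `iπ`, hence, by periodicity, entire. Being periodic with limits as `Re t → ±∞`, it is
bounded, so constant by Liouville's theorem. Since `tanh (t/2) → ±1` while `η₀, η₁ → 0`, its limits
are `-c` and `c`; hence `c = 0` and the constant is `0`.
-/

open Complex Filter Function Polynomial Set Topology
open scoped Real

section PrincipalPart

variable {𝕜 : Type*} [NontriviallyNormedField 𝕜] {p : 𝕜}

theorem AnalyticAt.dslope {h : 𝕜 → 𝕜} (hh : AnalyticAt 𝕜 h p) :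
    AnalyticAt 𝕜 (_root_.dslope h p) p :=
  let ⟨_, hq⟩ := hh
  ⟨_, hq.has_fpower_series_dslope_fslope⟩

theorem eventually_pow_mul_div_pow_eq {h : 𝕜 → 𝕜} (hp : h p = 0) (s : 𝕜 → 𝕜) (n : ℕ) :
    ∀ᶠ t in 𝓝[≠] p, (t - p) ^ n * (s t / h t ^ n) = s t / dslope h p t ^ n := by
  filter_upwards [self_mem_nhdsWithin] with t ht
  have hfac : h t = (t - p) * dslope h p t := by
    simpa [hp] using (sub_smul_dslope h p t).symm
  rw [hfac, mul_pow, ← div_div, mul_div_assoc',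
    mul_div_cancel₀ _ (pow_ne_zero n (sub_ne_zero.2 ht))]

theorem AnalyticAt.exists_pow_mul_div_pow_eq {h s : 𝕜 → 𝕜} (hh : AnalyticAt 𝕜 h p) (hp : h p = 0)
    (hd : deriv h p ≠ 0) (hs : AnalyticAt 𝕜 s p) (hsp : s p ≠ 0) (n : ℕ) :
    ∃ B : 𝕜 → 𝕜, AnalyticAt 𝕜 B p ∧ B p ≠ 0 ∧
      ∀ᶠ t in 𝓝[≠] p, (t - p) ^ n * (s t / h t ^ n) = B t := by
  refine ⟨fun t => s t / _root_.dslope h p t ^ n, hs.div (hh.dslope.pow n) ?_, ?_,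
    eventually_pow_mul_div_pow_eq hp s n⟩ <;> simp [hd, hsp]

theorem eventually_pow_mul_sub_eq_dslope {g b A B : 𝕜 → 𝕜} {n : ℕ}
    (hgA : ∀ᶠ t in 𝓝[≠] p, (t - p) ^ (n + 1) * g t = A t)
    (hbB : ∀ᶠ t in 𝓝[≠] p, (t - p) ^ (n + 1) * b t = B t) (hBp : B p ≠ 0) :
    ∀ᶠ t in 𝓝[≠] p, (t - p) ^ n * (g t - A p / B p * b t) =
      dslope (fun t => A t - A p / B p * B t) p t := by
  filter_upwards [hgA, hbB, self_mem_nhdsWithin] with t hg hb ht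
  rw [dslope_of_ne _ ht, slope_def_field, div_mul_cancel₀ _ hBp, sub_self, sub_zero, ← hg, ← hb,
    eq_div_iff (sub_ne_zero.2 ht)]
  ring

theorem MeromorphicAt.exists_mem_add_analyticAt {V : Submodule 𝕜 (𝕜 → 𝕜)}
    (hV : ∀ n : ℕ, 0 < n → ∃ b ∈ V, ∃ B : 𝕜 → 𝕜, AnalyticAt 𝕜 B p ∧ B p ≠ 0 ∧
      ∀ᶠ t in 𝓝[≠] p, (t - p) ^ n * b t = B t)
    {f : 𝕜 → 𝕜} (hf : MeromorphicAt f p) :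
    ∃ v ∈ V, ∃ G : 𝕜 → 𝕜, AnalyticAt 𝕜 G p ∧ f =ᶠ[𝓝[≠] p] v + G := by
  obtain ⟨n, hn⟩ := hf
  suffices key : ∀ (n : ℕ) (g A : 𝕜 → 𝕜), AnalyticAt 𝕜 A p →
      (∀ᶠ t in 𝓝[≠] p, (t - p) ^ n * g t = A t) →
      ∃ v ∈ V, ∃ G : 𝕜 → 𝕜, AnalyticAt 𝕜 G p ∧ g =ᶠ[𝓝[≠] p] v + G from
    key n f _ hn (.of_forall fun _ => (smul_eq_mul _ _).symm)
  intro n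
  induction n with
  | zero =>
    intro g A hA hgA
    exact ⟨0, V.zero_mem, A, hA, hgA.mono fun t ht => by simpa using ht⟩
  | succ n ih =>
    intro g A hA hgA
    obtain ⟨b, hbV, B, hB, hBp, hbB⟩ := hV (n + 1) n.succ_pos
    -- `c` cancels the leading coefficient of the pole, lowering its order by one
    set c := A p / B p
    obtain ⟨v, hv, G, hG, hgv⟩ := ih (fun t => g t - c * b t) _
      (hA.sub (analyticAt_const.mul hB)).dslope (eventually_pow_mul_sub_eq_dslope hgA hbB hBp)
    refine ⟨v + c • b, V.add_mem hv (V.smul_mem c hbV), G, hG, ?_⟩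
    filter_upwards [hgv] with t ht
    simp only [Pi.add_apply, Pi.smul_apply, smul_eq_mul] at ht ⊢
    linear_combination ht

end PrincipalPart

theorem mem_polesS_iff {t : ℂ} : t ∈ polesS ↔ cosh (t / 2) = 0 := by
  rw [← cos_mul_I, cos_eq_zero_iff]
  constructor
  · rintro ⟨k, rfl⟩
    refine ⟨-k - 1, ?_⟩
    push_cast
    linear_combination ((Real.pi : ℂ) * (2 * k + 1) / 2) * I_sq
  · rintro ⟨k, hk⟩
    refine ⟨-k - 1, ?_⟩
    push_cast
    linear_combination (-2 * I) * hk + t * I_sq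

theorem isClosed_polesS : IsClosed polesS := by
  rw [show polesS = {t | cosh (t / 2) = 0} from Set.ext fun _ => mem_polesS_iff]
  exact isClosed_eq (by fun_prop) continuous_const

theorem add_two_pi_I_div_two (t : ℂ) : (t + 2 * π * I) / 2 = t / 2 + π * I := by ring

theorem add_two_pi_I_mem_polesS_iff {t : ℂ} : t + 2 * π * I ∈ polesS ↔ t ∈ polesS := by
  rw [mem_polesS_iff, mem_polesS_iff, add_two_pi_I_div_two, cosh_add_pi_mul_I, neg_eq_zero]

theorem re_eq_zero_of_mem_polesS {t : ℂ} (ht : t ∈ polesS) : t.re = 0 := by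
  obtain ⟨k, rfl⟩ := ht
  simp

theorem exists_eq_pi_mul_I_add_of_mem_polesS {q : ℂ} (hq : q ∈ polesS) :
    ∃ k : ℤ, q = π * I + k * (2 * π * I) := by
  obtain ⟨k, rfl⟩ := hq
  exact ⟨k, by ring⟩

theorem pi_mul_I_mem_polesS : (π : ℂ) * I ∈ polesS := ⟨0, by simp⟩

theorem cosh_half_pi_mul_I : cosh ((π : ℂ) * I / 2) = 0 :=
  mem_polesS_iff.1 pi_mul_I_mem_polesS

theorem sinh_half_pi_mul_I : sinh ((π : ℂ) * I / 2) = I := by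
  rw [mul_div_right_comm, sinh_mul_I, ← Complex.ofReal_ofNat, ← ofReal_div, ← ofReal_sin,
    Real.sin_pi_div_two, ofReal_one, one_mul]

noncomputable def etaComb : ℂ × ℂ[X] × ℂ[X] →ₗ[ℂ] ℂ → ℂ where
  toFun x t := x.1 * tanh (t / 2) + eta0 t * x.2.1.eval (eta0 t) + eta1 t * x.2.2.eval (eta0 t)
  map_add' x y := by
    ext t
    simp only [Prod.fst_add, Prod.snd_add, eval_add, Pi.add_apply]
    ring
  map_smul' c x := by
    ext t
    simp only [Prod.smul_fst, Prod.smul_snd, eval_smul, smul_eq_mul, RingHom.id_apply,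
      Pi.smul_apply]
    ring

theorem etaComb_apply (c : ℂ) (P Q : ℂ[X]) (t : ℂ) :
    etaComb (c, P, Q) t =
      c * tanh (t / 2) + eta0 t * P.eval (eta0 t) + eta1 t * Q.eval (eta0 t) :=
  rfl

theorem eta0_periodic : Periodic eta0 (2 * π * I) := fun t => by
  simp only [eta0, add_two_pi_I_div_two, cosh_add_pi_mul_I, neg_sq]

theorem eta1_periodic : Periodic eta1 (2 * π * I) := fun t => by
  simp only [eta1, add_two_pi_I_div_two, cosh_add_pi_mul_I, sinh_add_pi_mul_I]
  ring

theorem etaComb_periodic (x : ℂ × ℂ[X] × ℂ[X]) : Periodic (etaComb x) (2 * π * I) := fun t => by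
  obtain ⟨c, P, Q⟩ := x
  simp only [etaComb_apply, eta0_periodic t, eta1_periodic t, add_two_pi_I_div_two,
    tanh_add_pi_mul_I]

theorem differentiableAt_etaComb (x : ℂ × ℂ[X] × ℂ[X]) {t : ℂ} (ht : t ∉ polesS) :
    DifferentiableAt ℂ (etaComb x) t := by
  obtain ⟨c, P, Q⟩ := x
  have hc : cosh (t / 2) ≠ 0 := mt mem_polesS_iff.2 ht
  simp only [etaComb, LinearMap.coe_mk, AddHom.coe_mk, eta0, eta1, tanh_eq_sinh_div_cosh]
  fun_prop (disch := simp [hc])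

theorem analyticAt_cosh_half (z : ℂ) : AnalyticAt ℂ (fun t : ℂ => cosh (t / 2)) z :=
  analyticAt_cosh.comp (by fun_prop)

theorem eventually_notMem_polesS_nhdsNE : ∀ᶠ t in 𝓝[≠] (π * I : ℂ), t ∉ polesS := by
  refine ((analyticAt_cosh_half _).eventually_eq_zero_or_eventually_ne_zero.resolve_left
    fun h0 => ?_).mono fun t ht => mt mem_polesS_iff.1 ht
  have := EventuallyEq.deriv_eq (f := 0) h0
  simp [sinh_half_pi_mul_I] at this

theorem exists_pole_mem_range_etaComb (n : ℕ) (hn : 0 < n) :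
    ∃ b ∈ LinearMap.range etaComb, ∃ B : ℂ → ℂ, AnalyticAt ℂ B (π * I) ∧ B (π * I) ≠ 0 ∧
      ∀ᶠ t in 𝓝[≠] (π * I : ℂ), (t - π * I) ^ n * b t = B t := by
  have pole {s : ℂ → ℂ} (hs : AnalyticAt ℂ s (π * I)) (hsp : s (π * I) ≠ 0) :=
    (analyticAt_cosh_half _).exists_pow_mul_div_pow_eq cosh_half_pi_mul_I
      (by simp [sinh_half_pi_mul_I]) hs hsp n
  have hsinh : AnalyticAt ℂ (fun t : ℂ => sinh (t / 2)) (π * I) :=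
    analyticAt_sinh.comp (by fun_prop)
  obtain ⟨k, rfl | rfl⟩ := Nat.even_or_odd' n
  · obtain ⟨j, rfl⟩ : ∃ j, k = j + 1 := Nat.exists_eq_succ_of_ne_zero (by omega)
    refine ⟨fun t => 1 / cosh (t / 2) ^ (2 * (j + 1)), ⟨(0, X ^ j, 0), ?_⟩,
      pole analyticAt_const one_ne_zero⟩
    ext t
    simp only [etaComb_apply, eta0, eval_pow, eval_X, eval_zero]
    ring
  · rcases k with _ | j
    · refine ⟨fun t => sinh (t / 2) / cosh (t / 2) ^ (2 * 0 + 1), ⟨(1, 0, 0), ?_⟩,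
        pole hsinh (by simp [sinh_half_pi_mul_I])⟩
      ext t
      simp [etaComb_apply, tanh_eq_sinh_div_cosh]
    · refine ⟨fun t => sinh (t / 2) / cosh (t / 2) ^ (2 * (j + 1) + 1), ⟨(0, 0, -X ^ j), ?_⟩,
        pole hsinh (by simp [sinh_half_pi_mul_I])⟩
      ext t
      simp only [etaComb_apply, eta0, eta1, eval_neg, eval_pow, eval_X, eval_zero]
      ring

theorem two_mul_exp_half_mul_cosh_half (t : ℂ) : 2 * exp (t / 2) * cosh (t / 2) = exp t + 1 := by
  rw [mul_right_comm, two_cosh, add_mul, ← exp_add, ← exp_add, add_halves, neg_add_cancel, exp_zero]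

theorem two_mul_exp_half_mul_sinh_half (t : ℂ) : 2 * exp (t / 2) * sinh (t / 2) = exp t - 1 := by
  rw [mul_right_comm, two_sinh, sub_mul, ← exp_add, ← exp_add, add_halves, neg_add_cancel, exp_zero]

theorem tanh_half_eq (t : ℂ) : tanh (t / 2) = (exp t - 1) / (exp t + 1) := by
  rw [tanh_eq_sinh_div_cosh, ← two_mul_exp_half_mul_cosh_half, ← two_mul_exp_half_mul_sinh_half,
    mul_div_mul_left _ _ (by simp [exp_ne_zero])]

theorem eta0_eq (t : ℂ) : eta0 t = (2 * exp (t / 2) / (exp t + 1)) ^ 2 := by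
  rw [eta0, ← one_div_pow, ← two_mul_exp_half_mul_cosh_half, ← mul_div_mul_left 1 _
    (by simp [exp_ne_zero] : 2 * exp (t / 2) ≠ 0), mul_one]

theorem eta1_eq_neg_tanh_mul_eta0 (t : ℂ) : eta1 t = -tanh (t / 2) * eta0 t := by
  rw [eta1, eta0, tanh_eq_sinh_div_cosh]
  ring

theorem tendsto_div_two_comap_re_atBot :
    Tendsto (fun t : ℂ => t / 2) (comap re atBot) (comap re atBot) :=
  tendsto_comap_iff.2 <| by
    simpa [Function.comp_def] using
      (tendsto_comap : Tendsto re (comap re atBot) atBot).atBot_div_const two_pos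

theorem tendsto_neg_comap_re_atTop : Tendsto Neg.neg (comap re atTop) (comap re atBot) :=
  tendsto_comap_iff.2 <| by
    simpa [Function.comp_def] using (tendsto_neg_atTop_atBot (G := ℝ)).comp tendsto_comap

theorem tendsto_tanh_half_comap_re_atBot :
    Tendsto (fun t => tanh (t / 2)) (comap re atBot) (𝓝 (-1)) := by
  have h : Tendsto (fun t => (exp t - 1) / (exp t + 1)) (comap re atBot)
      (𝓝 ((0 - 1) / (0 + 1))) :=
    (tendsto_exp_comap_re_atBot.sub_const 1).div (tendsto_exp_comap_re_atBot.add_const 1)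
      (by norm_num)
  rw [zero_sub, zero_add, div_one] at h
  exact h.congr fun t => (tanh_half_eq t).symm

theorem tendsto_eta0_comap_re_atBot : Tendsto eta0 (comap re atBot) (𝓝 0) := by
  have h : Tendsto (fun t => (2 * exp (t / 2) / (exp t + 1)) ^ 2) (comap re atBot)
      (𝓝 ((2 * 0 / (0 + 1)) ^ 2)) :=
    (((tendsto_exp_comap_re_atBot.comp tendsto_div_two_comap_re_atBot).const_mul 2).div
      (tendsto_exp_comap_re_atBot.add_const 1) (by norm_num)).pow 2
  rw [mul_zero, zero_div, zero_pow two_ne_zero] at h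
  exact h.congr fun t => (eta0_eq t).symm

theorem tendsto_tanh_half_comap_re_atTop :
    Tendsto (fun t => tanh (t / 2)) (comap re atTop) (𝓝 1) := by
  simpa [neg_div] using (tendsto_tanh_half_comap_re_atBot.comp tendsto_neg_comap_re_atTop).neg

theorem tendsto_eta0_comap_re_atTop : Tendsto eta0 (comap re atTop) (𝓝 0) := by
  refine (tendsto_eta0_comap_re_atBot.comp tendsto_neg_comap_re_atTop).congr fun t => ?_
  simp [eta0, neg_div]

theorem tendsto_etaComb {l : Filter ℂ} {L : ℂ} (htanh : Tendsto (fun t => tanh (t / 2)) l (𝓝 L))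
    (heta0 : Tendsto eta0 l (𝓝 0)) (x : ℂ × ℂ[X] × ℂ[X]) :
    Tendsto (etaComb x) l (𝓝 (x.1 * L)) := by
  obtain ⟨c, P, Q⟩ := x
  have heta1 : Tendsto eta1 l (𝓝 0) := by
    simpa using (htanh.neg.mul heta0).congr fun t => (eta1_eq_neg_tanh_mul_eta0 t).symm
  have h := ((tendsto_const_nhds (x := c)).mul htanh).add
    ((heta0.mul ((P.continuous.tendsto 0).comp heta0)).add
      (heta1.mul ((Q.continuous.tendsto 0).comp heta0)))
  refine Tendsto.congr (fun t => (etaComb_apply c P Q t).symm) ?_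
  simpa [← add_assoc] using h

theorem exists_differentiable_extension {g G : ℂ → ℂ}
    (hg : ∀ t ∉ polesS, DifferentiableAt ℂ g t) (hper : ∀ t ∉ polesS, g (t + 2 * π * I) = g t)
    (hG : AnalyticAt ℂ G (π * I)) (hgG : g =ᶠ[𝓝[≠] (π * I : ℂ)] G) :
    ∃ F : ℂ → ℂ, Differentiable ℂ F ∧ Periodic F (2 * π * I) ∧ EqOn F g polesSᶜ := by
  classical
  set F := polesS.piecewise (fun _ => G (π * I)) g
  have hFg : EqOn F g polesSᶜ := fun t ht => piecewise_eq_of_notMem _ _ _ ht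
  have hFper : Periodic F (2 * π * I) := fun t => by
    by_cases ht : t ∈ polesS
    · simp [F, ht, add_two_pi_I_mem_polesS_iff]
    · rw [hFg (mt add_two_pi_I_mem_polesS_iff.1 ht), hFg ht, hper t ht]
  have hFG : F =ᶠ[𝓝 (π * I)] G := by
    refine eventuallyEq_nhds_of_eventuallyEq_nhdsNE ?_
      (piecewise_eq_of_mem _ _ _ pi_mul_I_mem_polesS)
    filter_upwards [hgG, eventually_notMem_polesS_nhdsNE] with t hgt ht
    rw [hFg ht, hgt]
  refine ⟨F, fun q => ?_, hFper, hFg⟩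
  by_cases hq : q ∈ polesS
  · obtain ⟨k, rfl⟩ := exists_eq_pi_mul_I_add_of_mem_polesS hq
    rw [funext fun t => (hFper.sub_int_mul_eq (x := t) k).symm]
    exact differentiableAt_iff_comp_sub_const.1 (hFG.differentiableAt_iff.2 hG.differentiableAt)
  · exact (hg q hq).congr_of_eventuallyEq
      (hFg.eventuallyEq_of_mem (isClosed_polesS.isOpen_compl.mem_nhds hq))

theorem isBounded_range_of_periodic_of_tendsto {E : Type*} [NormedAddCommGroup E] {F : ℂ → E}
    (hF : Continuous F) {T : ℝ} (hT : 0 < T) (hper : Periodic F (T * I)) {a b : E}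
    (ha : Tendsto F (comap re atTop) (𝓝 a)) (hb : Tendsto F (comap re atBot) (𝓝 b)) :
    Bornology.IsBounded (range F) := by
  obtain ⟨C₁, hC₁⟩ := ha.norm.isBoundedUnder_le
  obtain ⟨C₂, hC₂⟩ := hb.norm.isBoundedUnder_le
  rw [eventually_map, eventually_comap, eventually_atTop] at hC₁
  rw [eventually_map, eventually_comap, eventually_atBot] at hC₂
  obtain ⟨R₁, hR₁⟩ := hC₁
  obtain ⟨R₂, hR₂⟩ := hC₂
  obtain ⟨M, hM⟩ := (isCompact_Icc.reProdIm isCompact_Icc).exists_bound_of_continuousOn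
    (s := Icc R₂ R₁ ×ℂ Icc 0 T) hF.continuousOn
  rw [isBounded_iff_forall_norm_le]
  refine ⟨max M (max C₁ C₂), ?_⟩
  rintro _ ⟨t, rfl⟩
  have hline : Periodic (fun s : ℝ => F (t.re + s * I)) T := fun s => by
    simpa [add_mul, add_assoc] using hper (t.re + s * I)
  obtain ⟨y, ⟨hy0, hyT⟩, hty⟩ := hline.exists_mem_Ico₀ hT t.im
  rw [← re_add_im t, hty]
  rcases le_total R₁ t.re with h₁ | h₁
  · exact (hR₁ _ h₁ _ (by simp)).trans (le_max_of_le_right (le_max_left _ _))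
  rcases le_total t.re R₂ with h₂ | h₂
  · exact (hR₂ _ h₂ _ (by simp)).trans (le_max_of_le_right (le_max_right _ _))
  · exact (hM _ ⟨by simpa using ⟨h₂, h₁⟩, by simpa using ⟨hy0, hyT.le⟩⟩).trans (le_max_left _ _)

theorem Differentiable.forall_eq_of_periodic_of_tendsto {E : Type*} [NormedAddCommGroup E]
    [NormedSpace ℂ E] {F : ℂ → E} (hF : Differentiable ℂ F) {T : ℝ} (hT : 0 < T)
    (hper : Periodic F (T * I)) {a b : E} (ha : Tendsto F (comap re atTop) (𝓝 a))
    (hb : Tendsto F (comap re atBot) (𝓝 b)) : a = b ∧ ∀ t, F t = a := by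
  obtain ⟨C, hC⟩ := hF.exists_const_forall_eq_of_bounded
    (isBounded_range_of_periodic_of_tendsto hF.continuous hT hper ha hb)
  have hlim {l : Filter ℝ} [l.NeBot] {L : E} (h : Tendsto F (comap re l) (𝓝 L)) : C = L :=
    haveI := NeBot.comap_of_surj ‹_› re_surjective
    tendsto_nhds_unique (tendsto_const_nhds.congr fun z => (hC z).symm) h
  exact ⟨(hlim ha).symm.trans (hlim hb), fun t => (hC t).trans (hlim ha)⟩

theorem Filter.Tendsto.congr_eqOn_compl_polesS {g F : ℂ → ℂ} {l : Filter ℝ} {L : ℂ}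
    (hg : Tendsto g (comap re l) (𝓝 L)) (hl : ∀ᶠ x in l, x ≠ 0) (hFg : EqOn F g polesSᶜ) :
    Tendsto F (comap re l) (𝓝 L) :=
  hg.congr' <| (hl.comap re).mono fun _ ht =>
    (hFg fun hp => ht (re_eq_zero_of_mem_polesS hp)).symm

/-- Any `2πi`-periodic function, holomorphic on `ℂ` away from `{iπ(2k+1)}`, meromorphic
at those points, and tending to `0` as `Re t → ±∞`, is a polynomial without constant term
in the base functions `η₀` and `η₁`, i.e. `f = P(η₀) + η₁·Q(η₀)` with `P(0) = 0`. -/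
theorem stmt_11 (f : ℂ → ℂ)
    (hol : DifferentiableOn ℂ f polesSᶜ)
    (mero : ∀ t ∈ polesS, MeromorphicAt f t)
    (per : ∀ t ∉ polesS, f (t + 2 * (Real.pi : ℂ) * Complex.I) = f t)
    (hlim_top : Filter.Tendsto f (Filter.comap Complex.re Filter.atTop) (nhds 0))
    (hlim_bot : Filter.Tendsto f (Filter.comap Complex.re Filter.atBot) (nhds 0)) :
    ∃ P Q : Polynomial ℂ, P.eval 0 = 0 ∧
      ∀ t ∉ polesS, f t = P.eval (eta0 t) + eta1 t * Q.eval (eta0 t) := by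
  obtain ⟨_, ⟨⟨c, P, Q⟩, rfl⟩, G, hG, hfG⟩ :=
    (mero _ pi_mul_I_mem_polesS).exists_mem_add_analyticAt exists_pole_mem_range_etaComb
  set g := f - etaComb (c, P, Q)
  obtain ⟨F, hF, hFper, hFg⟩ := exists_differentiable_extension (g := g)
    (fun t ht => (hol.differentiableAt (isClosed_polesS.isOpen_compl.mem_nhds ht)).sub
      (differentiableAt_etaComb _ ht))
    (fun t ht => by simp [g, per t ht, etaComb_periodic _ t]) hG
    (hfG.mono fun t ht => by simp [g, ht])
  have htop : Tendsto g (comap re atTop) (𝓝 (0 - c * 1)) := hlim_top.sub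
    (tendsto_etaComb tendsto_tanh_half_comap_re_atTop tendsto_eta0_comap_re_atTop (c, P, Q))
  have hbot : Tendsto g (comap re atBot) (𝓝 (0 - c * -1)) := hlim_bot.sub
    (tendsto_etaComb tendsto_tanh_half_comap_re_atBot tendsto_eta0_comap_re_atBot (c, P, Q))
  obtain ⟨hc, hF0⟩ := hF.forall_eq_of_periodic_of_tendsto Real.two_pi_pos
    (by exact_mod_cast hFper) (htop.congr_eqOn_compl_polesS (eventually_ne_atTop 0) hFg)
    (hbot.congr_eqOn_compl_polesS (eventually_ne_atBot 0) hFg)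
  obtain rfl : c = 0 := by linear_combination -hc / 2
  refine ⟨X * P, Q, by simp, fun t ht => ?_⟩
  have hgt : g t = 0 := by rw [← hFg ht, hF0]; ring
  simpa [g, etaComb_apply, sub_eq_zero] using hgt
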